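/- For every n ∈ ℕ one has the identity Σ_{m=0}^{n} (2(q − q^{1/2})·[m]_q − (2[1/2]_q − 1))·a_m·q^{n−m} = (q−1)·[n+1]_q²·a_{n+1} in Q. -/

import Mathlib

/- Setting (following Dwork-type q-congruences / q-hypergeometric papers):
`p` is an odd prime, `R = ℤ_p[[q−1]]` is implemented as `PowerSeries ℤ_[p]`, the power-series
variable `PowerSeries.X` standing for `q − 1`. -/

noncomputable section
open PowerSeries
namespace QDwork

variable (p : ℕ) [Fact p.Prime]

/-- `R = ℤ_p[[q−1]]`. -/
abbrev R : Type := PowerSeries ℤ_[p]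

/-- `q = 1 + (q−1) ∈ R`. -/
def qq : R p := 1 + PowerSeries.X

/-- `q^a = Σ_{i≥0} binom(a,i)(q−1)^i ∈ R` for `a ∈ ℤ_p`, using the p-adically interpolated
binomial coefficients `Ring.choose` (`ℤ_p` is a binomial ring). -/
def qpow (a : ℤ_[p]) : R p := PowerSeries.mk fun i => Ring.choose a i

/-- The q-number `[a]_q = (q^a−1)/(q−1) = Σ_{i≥1} binom(a,i)(q−1)^{i−1} ∈ R` for `a ∈ ℤ_p`. -/
def qnum (a : ℤ_[p]) : R p := PowerSeries.mk fun i => Ring.choose a (i + 1)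

/-- The q-number `[n]_q = 1 + q + ⋯ + q^{n−1} ∈ R` of a natural number `n`. -/
def qnat (n : ℕ) : R p := ∑ i ∈ Finset.range n, qq p ^ i

/-- `1/2 ∈ ℤ_p` (recall `p` is odd, so `2` is a unit of `ℤ_p`). -/
def half : ℤ_[p] := Ring.inverse 2

/-- `Q = Frac(R)`. -/
abbrev Q : Type := FractionRing (R p)

/-- The canonical injection `R → Q`. -/
def ι : R p →+* Q p := algebraMap (R p) (Q p)

/-- `q ∈ Q`. -/
def qQ : Q p := ι p (qq p)

/-- `[a]_q` viewed in `Q`, for `a ∈ ℤ_p`. -/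
def qnumQ (a : ℤ_[p]) : Q p := ι p (qnum p a)

/-- `[n]_q` viewed in `Q`, for a natural number `n`. -/
def qnatQ (n : ℕ) : Q p := ι p (qnat p n)

/-- `a_n = ∏_{i=0}^{n−1} ([i+1/2]_q/[i+1]_q)² ∈ Q`, with `a_0 = 1`. -/
def aCoef (n : ℕ) : Q p :=
  ∏ i ∈ Finset.range n, (qnumQ p ((i : ℤ_[p]) + half p) / qnumQ p ((i : ℤ_[p]) + 1)) ^ 2

/-- `F = Σ_{n≥0} a_n λ^n ∈ Q[[λ]]`. -/
def Fq : PowerSeries (Q p) := PowerSeries.mk fun n => aCoef p n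

/-! Write `c m = 2(q - q^{1/2})[m] - (2[1/2] - 1)` and `S n` for the left-hand side, so that
`S (n+1) = q S n + c (n+1) a_{n+1}`. Since `[n+1]² a_{n+1} = [n+1/2]² a_n`, the right-hand side
`b n = (q-1)[n+1]² a_{n+1}` obeys the same recurrence as soon as
`q(q-1)[m]² + c m = (q-1)[m+1/2]²`, and `c 0 = b 0` is this identity at `m = 0`. Multiplied by
`q - 1` it becomes polynomial in `q^m` and `q^{1/2}`, because `(q-1)[m] = q^m - 1`,
`(q-1)[m+1/2] = q^m q^{1/2} - 1` and `(q^{1/2})² = q`. -/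

end QDwork

theorem sum_range_mul_pow_sub_eq_of_recurrence {S : Type*} [CommSemiring S] (q : S)
    (c b : ℕ → S) (h₀ : c 0 = b 0) (hsucc : ∀ n, q * b n + c (n + 1) = b (n + 1)) (n : ℕ) :
    ∑ m ∈ Finset.range (n + 1), c m * q ^ (n - m) = b n := by
  induction n with
  | zero => simp [h₀]
  | succ n ih =>
    have hpow : ∀ m ∈ Finset.range (n + 1), c m * q ^ (n + 1 - m) = q * (c m * q ^ (n - m)) := by
      intro m hm
      rw [Nat.sub_add_comm (Finset.mem_range_succ_iff.mp hm), pow_succ]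
      ring
    rw [Finset.sum_range_succ, Finset.sum_congr rfl hpow, ← Finset.mul_sum, ih, ← hsucc]
    simp

theorem sub_one_mul_sq_eq_of_q_numbers {K : Type*} [CommRing K] [IsDomain K]
    (q s A N M h : K) (hq : q - 1 ≠ 0) (hs : s * s = q) (hh : (q - 1) * h = s - 1)
    (hN : (q - 1) * N = A - 1) (hM : (q - 1) * M = A * s - 1) :
    q * (q - 1) * N ^ 2 + 2 * (q - s) * N - (2 * h - 1) = (q - 1) * M ^ 2 := by
  apply mul_left_cancel₀ hq
  linear_combination (q * ((q - 1) * N + A - 1) + 2 * (q - s)) * hN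
    - ((q - 1) * M + A * s - 1) * hM - 2 * hh - A ^ 2 * hs

namespace QDwork

variable (p : ℕ) [Fact p.Prime]

theorem two_mul_half (hp : p ≠ 2) : (2 : ℤ_[p]) * half p = 1 := by
  refine Ring.mul_inverse_cancel _ (PadicInt.isUnit_iff.mpr ?_)
  rw [← Nat.cast_ofNat, PadicInt.norm_natCast_eq_one_iff]
  exact (Nat.coprime_primes Fact.out Nat.prime_two).mpr hp

theorem qpow_eq_binomialSeries (a : ℤ_[p]) : qpow p a = binomialSeries ℤ_[p] a := by
  ext n
  simp [qpow]

theorem qpow_add (a b : ℤ_[p]) : qpow p (a + b) = qpow p a * qpow p b := by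
  simp only [qpow_eq_binomialSeries, binomialSeries_add]

theorem qpow_natCast (n : ℕ) : qpow p n = qq p ^ n := by
  rw [qpow_eq_binomialSeries, binomialSeries_nat, qq]

theorem qpow_half_mul_self (hp : p ≠ 2) : qpow p (half p) * qpow p (half p) = qq p := by
  rw [← qpow_add, ← two_mul, two_mul_half p hp, ← Nat.cast_one, qpow_natCast, pow_one]

theorem qq_sub_one : qq p - 1 = X := by
  rw [qq, add_sub_cancel_left]

theorem qq_sub_one_ne_zero : qq p - 1 ≠ 0 :=
  qq_sub_one p ▸ X_ne_zero

theorem qq_sub_one_mul_qnum (a : ℤ_[p]) : (qq p - 1) * qnum p a = qpow p a - 1 := by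
  rw [qq_sub_one]
  ext (_ | n)
  · simp [qpow]
  · simp [qnum, qpow, coeff_succ_X_mul]

theorem qq_sub_one_mul_qnat (n : ℕ) : (qq p - 1) * qnat p n = qq p ^ n - 1 := by
  rw [qnat, mul_comm, geom_sum_mul]

theorem qnum_natCast (n : ℕ) : qnum p n = qnat p n := by
  refine mul_left_cancel₀ (qq_sub_one_ne_zero p) ?_
  rw [qq_sub_one_mul_qnum, qq_sub_one_mul_qnat, qpow_natCast]

theorem qnum_ne_zero {a : ℤ_[p]} (ha : a ≠ 0) : qnum p a ≠ 0 := by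
  contrapose! ha
  simpa [qnum, Ring.choose_one_right] using congrArg (coeff 0) ha

theorem qnat_half_sq_identity (hp : p ≠ 2) (m : ℕ) :
    qq p * (qq p - 1) * qnat p m ^ 2 + 2 * (qq p - qpow p (half p)) * qnat p m
      - (2 * qnum p (half p) - 1) = (qq p - 1) * qnum p (m + half p) ^ 2 := by
  refine sub_one_mul_sq_eq_of_q_numbers _ _ (qq p ^ m) _ _ _ (qq_sub_one_ne_zero p)
    (qpow_half_mul_self p hp) (qq_sub_one_mul_qnum p _) (qq_sub_one_mul_qnat p m) ?_
  rw [qq_sub_one_mul_qnum, qpow_add, qpow_natCast]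

theorem qnatQ_half_sq_identity (hp : p ≠ 2) (m : ℕ) :
    qQ p * (qQ p - 1) * qnatQ p m ^ 2 + 2 * (qQ p - ι p (qpow p (half p))) * qnatQ p m
      - (2 * qnumQ p (half p) - 1) = (qQ p - 1) * qnumQ p (m + half p) ^ 2 := by
  simpa [qQ, qnatQ, qnumQ, map_ofNat] using congrArg (ι p) (qnat_half_sq_identity p hp m)

theorem qnatQ_sq_mul_aCoef_succ (n : ℕ) :
    qnatQ p (n + 1) ^ 2 * aCoef p (n + 1) = qnumQ p (n + half p) ^ 2 * aCoef p n := by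
  have hN : qnumQ p ((n : ℤ_[p]) + 1) = qnatQ p (n + 1) := by
    rw [qnumQ, ← Nat.cast_succ, qnum_natCast, qnatQ]
  have hN0 : qnatQ p (n + 1) ≠ 0 := by
    rw [← hN, qnumQ, ← Nat.cast_succ]
    exact IsFractionRing.to_map_ne_zero_of_mem_nonZeroDivisors
      (mem_nonZeroDivisors_of_ne_zero (qnum_ne_zero p (Nat.cast_ne_zero.mpr n.succ_ne_zero)))
  rw [aCoef, Finset.prod_range_succ, ← aCoef, hN]
  field_simp

/-- For every `n ∈ ℕ`:
`Σ_{m=0}^{n} (2(q − q^{1/2})[m]_q − (2[1/2]_q − 1))·a_m·q^{n−m} = (q−1)·[n+1]_q²·a_{n+1}`. -/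
theorem a_coeff_sum_identity (hp : p ≠ 2) (n : ℕ) :
    ∑ m ∈ Finset.range (n + 1),
      (2 * (qQ p - ι p (qpow p (half p))) * qnatQ p m - (2 * qnumQ p (half p) - 1)) *
        aCoef p m * qQ p ^ (n - m) =
      (qQ p - 1) * qnatQ p (n + 1) ^ 2 * aCoef p (n + 1) := by
  refine sum_range_mul_pow_sub_eq_of_recurrence (qQ p)
    (fun m => (2 * (qQ p - ι p (qpow p (half p))) * qnatQ p m - (2 * qnumQ p (half p) - 1)) *
      aCoef p m)
    (fun n => (qQ p - 1) * qnatQ p (n + 1) ^ 2 * aCoef p (n + 1)) ?_ ?_ n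
  · have hqnat0 : qnatQ p 0 = 0 := by simp [qnatQ, qnat]
    have h0 := qnatQ_half_sq_identity p hp 0
    rw [hqnat0] at h0
    rw [mul_assoc _ _ (aCoef p (0 + 1)), qnatQ_sq_mul_aCoef_succ, hqnat0]
    linear_combination aCoef p 0 * h0
  · intro n
    rw [mul_assoc _ _ (aCoef p (n + 1 + 1)), qnatQ_sq_mul_aCoef_succ]
    linear_combination aCoef p (n + 1) * qnatQ_half_sq_identity p hp (n + 1)

end QDwork
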